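/- arXiv:2010.03156 — 3 statements merged into one kernel-verified Lean document; each statement's English description precedes it below -/
import Mathlib

section
/- Let m ≥ 0, γ = (m+2)/2, and let y₁(t) = C₀ t^{1/2} K_{1/(2γ)}(γ⁻¹ t^γ) with C₀ = γ^{-1/(2γ)} 2^{1−1/(2γ)} Γ(1/(2γ))⁻¹. Then lim_{t→0⁺} y₁(t) = 1 and lim_{t→∞} y₁(t) = 0. -/
open MeasureTheory Real Filter

/-- The modified Bessel function of the second kind,
`K_ν(t) = ∫₀^∞ e^{-t cosh z} cosh (ν z) dz`. -/
noncomputable def besselK (ν t : ℝ) : ℝ :=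
  ∫ z in Set.Ioi (0 : ℝ), Real.exp (-t * Real.cosh z) * Real.cosh (ν * z)

namespace BesselAux

open Set

/-- The Gamma-like integral that appears after the substitution `s = (x/2) e^z`. -/
noncomputable def F (ν x : ℝ) : ℝ :=
  ∫ s in Ioi (0 : ℝ), s ^ (ν - 1) * Real.exp (-s - x ^ 2 / (4 * s))

lemma integrableOn_g {ν : ℝ} (hν : 0 < ν) (x : ℝ) :
    IntegrableOn (fun s : ℝ => s ^ (ν - 1) * Real.exp (-s - x ^ 2 / (4 * s))) (Ioi 0) := by
  refine (Real.GammaIntegral_convergent hν).mono' ?_ ?_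
  · refine ContinuousOn.aestronglyMeasurable ?_ measurableSet_Ioi
    intro s hs
    have hs0 : (s : ℝ) ≠ 0 := (mem_Ioi.mp hs).ne'
    refine ContinuousWithinAt.mul ?_ ?_
    · exact (Real.continuousAt_rpow_const s _ (Or.inl hs0)).continuousWithinAt
    · refine (Real.continuous_exp.continuousAt.comp ?_).continuousWithinAt
      have : ContinuousAt (fun s : ℝ => -s - x ^ 2 / (4 * s)) s := by
        refine ContinuousAt.sub continuousAt_id.neg ?_
        · exact ContinuousAt.div continuousAt_const (by fun_prop) (by simpa using hs0)
      exact this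
  · filter_upwards [ae_restrict_mem measurableSet_Ioi] with s hs
    have hs0 : (0 : ℝ) < s := hs
    have h1 : (0 : ℝ) < s ^ (ν - 1) := Real.rpow_pos_of_pos hs0 _
    rw [Real.norm_eq_abs, abs_of_nonneg (by positivity), mul_comm]
    refine mul_le_mul_of_nonneg_right ?_ h1.le
    exact Real.exp_le_exp.2 (by nlinarith [sq_nonneg x, div_nonneg (sq_nonneg x) (by linarith : (0:ℝ) ≤ 4 * s)])

lemma key_pointwise {ν x : ℝ} (hx : 0 < x) (z : ℝ) :
    |x / 2 * Real.exp z| •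
        ((x / 2 * Real.exp z) ^ (ν - 1) *
          Real.exp (-(x / 2 * Real.exp z) - x ^ 2 / (4 * (x / 2 * Real.exp z)))) =
      (x / 2) ^ ν * Real.exp (-x * Real.cosh z + ν * z) := by
  have hx2 : (0 : ℝ) < x / 2 := by linarith
  have ha : (0 : ℝ) < x / 2 * Real.exp z := mul_pos hx2 (Real.exp_pos z)
  have habs : |x / 2 * Real.exp z| = x / 2 * Real.exp z := abs_of_pos ha
  have hpow : (x / 2 * Real.exp z) * (x / 2 * Real.exp z) ^ (ν - 1)
      = (x / 2) ^ ν * Real.exp (ν * z) := by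
    have h1 : (x / 2 * Real.exp z) * (x / 2 * Real.exp z) ^ (ν - 1)
        = (x / 2 * Real.exp z) ^ (1 + (ν - 1)) := by
      rw [Real.rpow_add ha, Real.rpow_one]
    rw [h1, show (1 : ℝ) + (ν - 1) = ν by ring,
      Real.mul_rpow hx2.le (Real.exp_pos z).le, ← Real.exp_mul, mul_comm z ν]
  have hexp : -(x / 2 * Real.exp z) - x ^ 2 / (4 * (x / 2 * Real.exp z))
      = -x * Real.cosh z := by
    have he : x ^ 2 / (4 * (x / 2 * Real.exp z)) = x / 2 * Real.exp (-z) := by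
      rw [Real.exp_neg]
      field_simp
      ring
    rw [he, Real.cosh_eq]
    ring
  rw [habs, smul_eq_mul, ← mul_assoc, hpow, hexp, mul_assoc, ← Real.exp_add]
  ring_nf

lemma himg {x : ℝ} (hx : 0 < x) :
    (fun z : ℝ => x / 2 * Real.exp z) '' univ = Ioi 0 := by
  rw [image_univ]
  ext y
  constructor
  · rintro ⟨z, rfl⟩
    exact mul_pos (by linarith) (Real.exp_pos z)
  · intro hy
    refine ⟨Real.log (y / (x / 2)), ?_⟩
    show x / 2 * Real.exp (Real.log (y / (x / 2))) = y
    rw [Real.exp_log (div_pos hy (by linarith))]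
    field_simp

lemma hderiv {x : ℝ} :
    ∀ z ∈ (univ : Set ℝ), HasDerivWithinAt (fun z : ℝ => x / 2 * Real.exp z)
      (x / 2 * Real.exp z) univ z :=
  fun z _ => ((Real.hasDerivAt_exp z).const_mul (x / 2)).hasDerivWithinAt

lemma hinj {x : ℝ} (hx : 0 < x) :
    InjOn (fun z : ℝ => x / 2 * Real.exp z) univ := by
  intro a _ b _ h
  have hx2 : x / 2 ≠ 0 := by positivity
  exact Real.exp_injective (mul_left_cancel₀ hx2 h)

lemma F_eq {ν x : ℝ} (hν : 0 < ν) (hx : 0 < x) :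
    F ν x = (x / 2) ^ ν * ∫ z : ℝ, Real.exp (-x * Real.cosh z + ν * z) := by
  have := integral_image_eq_integral_abs_deriv_smul MeasurableSet.univ (hderiv (x := x))
    (hinj hx) (fun s : ℝ => s ^ (ν - 1) * Real.exp (-s - x ^ 2 / (4 * s)))
  rw [himg hx] at this
  rw [F, this, Measure.restrict_univ]
  simp_rw [key_pointwise hx]
  rw [integral_const_mul]

lemma integrable_h {ν x : ℝ} (hν : 0 < ν) (hx : 0 < x) :
    Integrable (fun z : ℝ => Real.exp (-x * Real.cosh z + ν * z)) := by
  have h1 := (integrableOn_image_iff_integrableOn_abs_deriv_smul MeasurableSet.univ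
    (hderiv (x := x)) (hinj hx)
    (fun s : ℝ => s ^ (ν - 1) * Real.exp (-s - x ^ 2 / (4 * s)))).mp
    (by rw [himg hx]; exact integrableOn_g hν x)
  rw [integrableOn_univ] at h1
  have h2 : Integrable (fun z : ℝ => (x / 2) ^ ν * Real.exp (-x * Real.cosh z + ν * z)) := by
    refine h1.congr (Eventually.of_forall fun z => ?_)
    exact key_pointwise hx z
  have hc : ((x / 2 : ℝ) ^ ν) ≠ 0 := by positivity
  have := h2.const_mul (((x / 2 : ℝ) ^ ν)⁻¹)
  refine this.congr (Eventually.of_forall fun z => ?_)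
  field_simp

lemma besselK_eq {ν x : ℝ} (hν : 0 < ν) (hx : 0 < x) :
    besselK ν x = (2 : ℝ) ^ (ν - 1) * x ^ (-ν) * F ν x := by
  set h : ℝ → ℝ := fun z => Real.exp (-x * Real.cosh z + ν * z) with hh
  have hInt : Integrable h := integrable_h hν hx
  have step1 : besselK ν x = ∫ z in Ioi (0 : ℝ), (h z + h (-z)) / 2 := by
    unfold besselK
    refine integral_congr_ae (Eventually.of_forall fun z => ?_)
    simp only [hh, Real.cosh_neg]
    rw [Real.cosh_eq (ν * z), Real.exp_add, Real.exp_add, mul_neg]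
    ring
  have hIntNeg : IntegrableOn (fun z : ℝ => h (-z)) (Ioi 0) := by
    refine (hInt.integrableOn (s := Ioi 0)).mono' ?_ ?_
    · refine Continuous.aestronglyMeasurable ?_
      fun_prop
    · filter_upwards [ae_restrict_mem measurableSet_Ioi] with z hz
      have hz0 : (0 : ℝ) < z := hz
      simp only [hh, Real.cosh_neg, Real.norm_eq_abs, abs_of_pos (Real.exp_pos _)]
      exact Real.exp_le_exp.2 (by nlinarith)
  have step2 : (∫ z in Ioi (0 : ℝ), (h z + h (-z)) / 2)
      = (1 / 2) * ((∫ z in Ioi (0 : ℝ), h z) + ∫ z in Ioi (0 : ℝ), h (-z)) := by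
    rw [integral_div, integral_add hInt.integrableOn hIntNeg]
    ring
  have step3 : (∫ z in Ioi (0 : ℝ), h (-z)) = ∫ z in Iic (0 : ℝ), h z := by
    have := integral_comp_neg_Ioi (0 : ℝ) h
    simpa using this
  have step4 : (∫ z in Iic (0 : ℝ), h z) + (∫ z in Ioi (0 : ℝ), h z) = ∫ z, h z := by
    have := integral_add_compl (measurableSet_Iic (a := (0 : ℝ))) hInt
    rwa [compl_Iic] at this
  have hG : (∫ z, h z) = ((x / 2) ^ ν)⁻¹ * F ν x := by
    have hc : ((x / 2 : ℝ) ^ ν) ≠ 0 := by positivity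
    rw [F_eq hν hx, ← mul_assoc, inv_mul_cancel₀ hc, one_mul]
  have hconst : (1 / 2 : ℝ) * ((x / 2) ^ ν)⁻¹ = (2 : ℝ) ^ (ν - 1) * x ^ (-ν) := by
    rw [Real.div_rpow hx.le (by norm_num : (0:ℝ) ≤ 2), Real.rpow_neg hx.le,
      Real.rpow_sub (by norm_num : (0:ℝ) < 2), Real.rpow_one]
    have h2 : ((2 : ℝ) ^ ν) ≠ 0 := by positivity
    have hxν : ((x : ℝ) ^ ν) ≠ 0 := by positivity
    field_simp
    try ring
  rw [step1, step2, step3, add_comm, step4, hG, ← mul_assoc, hconst]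

lemma tendsto_F_zero {ν : ℝ} (hν : 0 < ν) :
    Tendsto (F ν) (nhdsWithin 0 (Ioi 0)) (nhds (Real.Gamma ν)) := by
  have key : Tendsto (F ν) (nhdsWithin 0 (Ioi 0))
      (nhds (∫ s in Ioi (0 : ℝ), s ^ (ν - 1) * Real.exp (-s))) := by
    refine tendsto_integral_filter_of_dominated_convergence
      (fun s => Real.exp (-s) * s ^ (ν - 1)) ?_ ?_ (Real.GammaIntegral_convergent hν) ?_
    · exact Eventually.of_forall fun x => (integrableOn_g hν x).aestronglyMeasurable
    · refine Eventually.of_forall fun x => ?_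
      filter_upwards [ae_restrict_mem measurableSet_Ioi] with s hs
      have hs0 : (0 : ℝ) < s := hs
      have h1 : (0 : ℝ) < s ^ (ν - 1) := Real.rpow_pos_of_pos hs0 _
      rw [Real.norm_eq_abs, abs_of_nonneg (by positivity), mul_comm]
      refine mul_le_mul_of_nonneg_right ?_ h1.le
      exact Real.exp_le_exp.2 (by nlinarith [div_nonneg (sq_nonneg x) (by linarith : (0:ℝ) ≤ 4 * s)])
    · filter_upwards [ae_restrict_mem measurableSet_Ioi] with s hs
      have hs0 : (0 : ℝ) < s := hs
      have hc : ContinuousAt (fun x : ℝ => s ^ (ν - 1) * Real.exp (-s - x ^ 2 / (4 * s))) 0 := by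
        have h4s : (4 : ℝ) * s ≠ 0 := by positivity
        fun_prop (disch := assumption)
      have := hc.tendsto
      simp only [ne_eq, OfNat.ofNat_ne_zero, not_false_eq_true, zero_pow, zero_div, sub_zero] at this
      exact this.mono_left nhdsWithin_le_nhds
  have heq : (∫ s in Ioi (0 : ℝ), s ^ (ν - 1) * Real.exp (-s)) = Real.Gamma ν := by
    rw [Real.Gamma_eq_integral hν]
    exact integral_congr_ae (Eventually.of_forall fun s => mul_comm _ _)
  rwa [heq] at key

lemma tendsto_F_atTop {ν : ℝ} (hν : 0 < ν) :
    Tendsto (F ν) atTop (nhds 0) := by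
  have key : Tendsto (F ν) atTop (nhds (∫ s in Ioi (0 : ℝ), (0 : ℝ))) := by
    refine tendsto_integral_filter_of_dominated_convergence
      (fun s => Real.exp (-s) * s ^ (ν - 1)) ?_ ?_ (Real.GammaIntegral_convergent hν) ?_
    · exact Eventually.of_forall fun x => (integrableOn_g hν x).aestronglyMeasurable
    · refine Eventually.of_forall fun x => ?_
      filter_upwards [ae_restrict_mem measurableSet_Ioi] with s hs
      have hs0 : (0 : ℝ) < s := hs
      have h1 : (0 : ℝ) < s ^ (ν - 1) := Real.rpow_pos_of_pos hs0 _
      rw [Real.norm_eq_abs, abs_of_nonneg (by positivity), mul_comm]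
      refine mul_le_mul_of_nonneg_right ?_ h1.le
      exact Real.exp_le_exp.2 (by nlinarith [div_nonneg (sq_nonneg x) (by linarith : (0:ℝ) ≤ 4 * s)])
    · filter_upwards [ae_restrict_mem measurableSet_Ioi] with s hs
      have hs0 : (0 : ℝ) < s := hs
      have h1 : Tendsto (fun x : ℝ => -s - x ^ 2 / (4 * s)) atTop atBot := by
        refine tendsto_atBot_add_const_left _ _ ?_
        refine tendsto_neg_atTop_atBot.comp ?_
        exact (tendsto_pow_atTop (two_ne_zero)).atTop_div_const (by positivity)
      have h2 : Tendsto (fun x : ℝ => Real.exp (-s - x ^ 2 / (4 * s))) atTop (nhds 0) :=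
        Real.tendsto_exp_atBot.comp h1
      simpa using h2.const_mul (s ^ (ν - 1))
  simpa using key

end BesselAux

theorem stmt_4 (m : ℝ) (hm : 0 ≤ m) (γ : ℝ) (hγ : γ = (m + 2) / 2)
    (C₀ : ℝ)
    (hC₀ : C₀ = γ ^ (-1 / (2 * γ)) * (2 : ℝ) ^ (1 - 1 / (2 * γ)) * (Real.Gamma (1 / (2 * γ)))⁻¹)
    (y₁ : ℝ → ℝ)
    (hy₁ : ∀ t : ℝ, y₁ t = C₀ * t ^ ((1 : ℝ) / 2) * besselK (1 / (2 * γ)) (γ⁻¹ * t ^ γ)) :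
    Tendsto y₁ (nhdsWithin 0 (Set.Ioi 0)) (nhds 1) ∧ Tendsto y₁ atTop (nhds 0) := by
  have hγpos : 0 < γ := by rw [hγ]; linarith
  set ν : ℝ := 1 / (2 * γ) with hν
  have hνpos : 0 < ν := by positivity
  have hγν : γ * ν = 1 / 2 := by
    rw [hν]; field_simp
  have hΓpos : 0 < Real.Gamma ν := Real.Gamma_pos_of_pos hνpos
  -- the key pointwise formula for t > 0
  have hform : ∀ t : ℝ, 0 < t → y₁ t = (Real.Gamma ν)⁻¹ * BesselAux.F ν (γ⁻¹ * t ^ γ) := by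
    intro t ht
    have hx : 0 < γ⁻¹ * t ^ γ := mul_pos (inv_pos.mpr hγpos) (Real.rpow_pos_of_pos ht γ)
    rw [hy₁ t, BesselAux.besselK_eq hνpos hx]
    have hxpow : (γ⁻¹ * t ^ γ) ^ (-ν) = γ ^ ν * t ^ (-(1 / 2 : ℝ)) := by
      rw [Real.mul_rpow (by positivity) (by positivity),
        Real.inv_rpow hγpos.le, ← Real.rpow_neg hγpos.le, neg_neg,
        ← Real.rpow_mul ht.le, show γ * (-ν) = -(1/2 : ℝ) by rw [mul_neg, hγν]]
    have ht12 : t ^ ((1 : ℝ) / 2) * t ^ (-(1 / 2 : ℝ)) = 1 := by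
      rw [← Real.rpow_add ht]; norm_num
    have hC : C₀ * ((2 : ℝ) ^ (ν - 1) * γ ^ ν) = (Real.Gamma ν)⁻¹ := by
      rw [hC₀]
      have h1 : (-1 : ℝ) / (2 * γ) = -ν := by rw [hν]; ring
      have h2 : (1 : ℝ) - 1 / (2 * γ) = 1 - ν := by rw [hν]
      rw [h1, h2]
      have e1 : γ ^ (-ν) * γ ^ ν = 1 := by
        rw [← Real.rpow_add hγpos]; norm_num
      have e2 : (2 : ℝ) ^ (1 - ν) * (2 : ℝ) ^ (ν - 1) = 1 := by
        rw [← Real.rpow_add (by norm_num : (0:ℝ) < 2)]; norm_num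
      calc γ ^ (-ν) * (2:ℝ) ^ (1 - ν) * (Real.Gamma ν)⁻¹ * ((2:ℝ) ^ (ν - 1) * γ ^ ν)
          = (γ ^ (-ν) * γ ^ ν) * ((2:ℝ) ^ (1 - ν) * (2:ℝ) ^ (ν - 1)) * (Real.Gamma ν)⁻¹ := by
            ring
        _ = (Real.Gamma ν)⁻¹ := by rw [e1, e2]; ring
    calc C₀ * t ^ ((1:ℝ)/2) * ((2:ℝ) ^ (ν - 1) * (γ⁻¹ * t ^ γ) ^ (-ν) * BesselAux.F ν (γ⁻¹ * t ^ γ))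
        = C₀ * ((2:ℝ) ^ (ν - 1) * γ ^ ν) * (t ^ ((1:ℝ)/2) * t ^ (-(1/2:ℝ)))
            * BesselAux.F ν (γ⁻¹ * t ^ γ) := by rw [hxpow]; ring
      _ = (Real.Gamma ν)⁻¹ * BesselAux.F ν (γ⁻¹ * t ^ γ) := by rw [hC, ht12]; ring
  constructor
  · -- limit at 0⁺
    have hmap : Tendsto (fun t : ℝ => γ⁻¹ * t ^ γ) (nhdsWithin 0 (Set.Ioi 0))
        (nhdsWithin 0 (Set.Ioi 0)) := by
      rw [tendsto_nhdsWithin_iff]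
      constructor
      · have hcont : ContinuousAt (fun t : ℝ => t ^ γ) 0 :=
          Real.continuousAt_rpow_const 0 γ (Or.inr hγpos.le)
        have := (hcont.tendsto.const_mul γ⁻¹).mono_left
          (nhdsWithin_le_nhds (s := Set.Ioi (0 : ℝ)))
        simpa [Real.zero_rpow hγpos.ne'] using this
      · exact eventually_nhdsWithin_of_forall fun t ht =>
          mul_pos (inv_pos.mpr hγpos) (Real.rpow_pos_of_pos ht γ)
    have h1 : Tendsto (fun t : ℝ => (Real.Gamma ν)⁻¹ * BesselAux.F ν (γ⁻¹ * t ^ γ))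
        (nhdsWithin 0 (Set.Ioi 0)) (nhds ((Real.Gamma ν)⁻¹ * Real.Gamma ν)) :=
      ((BesselAux.tendsto_F_zero hνpos).comp hmap).const_mul _
    rw [inv_mul_cancel₀ hΓpos.ne'] at h1
    refine h1.congr' ?_
    filter_upwards [self_mem_nhdsWithin] with t ht
    exact (hform t ht).symm
  · -- limit at ∞
    have hmap : Tendsto (fun t : ℝ => γ⁻¹ * t ^ γ) atTop atTop :=
      (tendsto_rpow_atTop hγpos).const_mul_atTop (inv_pos.mpr hγpos)
    have h1 : Tendsto (fun t : ℝ => (Real.Gamma ν)⁻¹ * BesselAux.F ν (γ⁻¹ * t ^ γ))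
        atTop (nhds ((Real.Gamma ν)⁻¹ * 0)) :=
      ((BesselAux.tendsto_F_atTop hνpos).comp hmap).const_mul _
    rw [mul_zero] at h1
    refine h1.congr' ?_
    filter_upwards [eventually_gt_atTop 0] with t ht
    exact (hform t ht).symm
end

section
/- Let N ∈ ℕ, θ ∈ (1, ∞), λ ∈ (0,1), and let φ_λ : ℝ^N → ℝ_{>0} satisfy φ_λ(x) ≤ C₁ (1+λ|x|)^{−(N−1)/2} e^{λ|x|} for all x with a constant C₁ ≥ 1. Then there exist C = C(N, θ, C₁) > 1 and R₀ = R₀(N, θ, λ) > 0 such that for all R ≥ R₀: ∫_{|x| < R} φ_λ(x)^θ dx ≤ C λ^{−(N−1)θ/2 − 1} (1 + R)^{N−1−(N−1)θ/2} e^{λ θ R}. -/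
/-!
Write `a = (N - 1)θ/2` and `b = λθ`, so that `φ ^ θ ≤ C₁ ^ θ (1 + λ|x|) ^ (-a) e ^ (b|x|)`.
Splitting at `|x| = R/2` bounds this everywhere by
`C₁ ^ θ (e ^ (bR/2) + (1 + λR/2) ^ (-a) e ^ (b|x|))`.
The constant term integrates to `O(R ^ N e ^ (bR/2))`, which is negligible as soon as
`(1 + R) ^ (a + 1) ≤ e ^ (bR/2)`; this fixes `R₀`. For the other term, polar coordinates give
`∫_{|x|<R} e ^ (b|x|) ≤ N |B₁| R ^ (N-1) e ^ (bR) / b`, and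
`(1 + λR/2) ^ (-a) ≤ 2 ^ a λ ^ (-a) (1 + R) ^ (-a)`.
-/

open MeasureTheory Real Metric Set Filter Module

theorem eventually_one_add_rpow_le_exp (p : ℝ) {c : ℝ} (hc : 0 < c) :
    ∀ᶠ R in atTop, (1 + R) ^ p ≤ exp (c * R) := by
  have h := ((isLittleO_rpow_exp_pos_mul_atTop p hc).comp_tendsto
    (tendsto_atTop_add_const_left atTop 1 tendsto_id)).bound (exp_pos (-c))
  filter_upwards [h] with R hR
  simp only [Function.comp_apply, norm_eq_abs, abs_exp, ← exp_add, mul_add, mul_one,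
    neg_add_cancel_left] at hR
  exact (le_abs_self _).trans hR

theorem integral_Ioo_pow_mul_exp_le (n : ℕ) {b R : ℝ} (hb : 0 < b) (hR : 0 ≤ R) :
    ∫ r in Ioo 0 R, r ^ n * exp (b * r) ≤ R ^ n * exp (b * R) / b := by
  rw [← integral_Ioc_eq_integral_Ioo, ← intervalIntegral.integral_of_le hR]
  calc ∫ r in (0)..R, r ^ n * exp (b * r)
      ≤ ∫ r in (0)..R, R ^ n * exp (b * r) := by
        refine intervalIntegral.integral_mono_on hR
          ((by fun_prop : Continuous _).intervalIntegrable _ _)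
          ((by fun_prop : Continuous _).intervalIntegrable _ _) fun r hr => ?_
        gcongr
        exacts [hr.1, hr.2]
    _ = R ^ n * ((exp (b * R) - 1) / b) := by
        rw [intervalIntegral.integral_const_mul, intervalIntegral.integral_comp_mul_left
          (fun u => exp u) hb.ne', integral_exp, mul_zero, exp_zero, smul_eq_mul]
        field_simp
    _ ≤ R ^ n * exp (b * R) / b := by
        rw [mul_div_assoc]
        gcongr
        linarith

theorem one_add_mul_rpow_neg_mul_exp_le {lam a b s t : ℝ} (hlam : 0 ≤ lam) (ha : 0 ≤ a)
    (hb : 0 ≤ b) (hs : 0 ≤ s) (ht : 0 ≤ t) :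
    (1 + lam * t) ^ (-a) * exp (b * t) ≤ exp (b * s) + (1 + lam * s) ^ (-a) * exp (b * t) := by
  rcases le_total t s with hts | hst
  · have h1 : (1 + lam * t) ^ (-a) ≤ 1 :=
      rpow_le_one_of_one_le_of_nonpos (by nlinarith) (by linarith)
    have h2 : exp (b * t) ≤ exp (b * s) := by gcongr
    nlinarith [exp_pos (b * t), rpow_nonneg (by positivity : (0 : ℝ) ≤ 1 + lam * s) (-a)]
  · have : (1 + lam * t) ^ (-a) ≤ (1 + lam * s) ^ (-a) :=
      rpow_le_rpow_of_nonpos (by positivity) (by gcongr) (by linarith)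
    nlinarith [exp_pos (b * t), exp_pos (b * s)]

theorem pow_mul_exp_half_le {d : ℕ} {lam a b R : ℝ} (hlam : 0 < lam) (hlam1 : lam ≤ 1)
    (ha : 0 ≤ a) (hR : 0 ≤ R) (hR₀ : (1 + R) ^ (a + 1) ≤ exp (b / 2 * R)) :
    R ^ d * exp (b * (R / 2)) ≤ lam ^ (-a - 1) * (1 + R) ^ ((d : ℝ) - 1 - a) * exp (b * R) := by
  have hR' : 0 < 1 + R := by linarith
  have hlam_pow : 1 ≤ lam ^ (-a - 1) :=
    one_le_rpow_of_pos_of_le_one_of_nonpos hlam hlam1 (by linarith)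
  calc R ^ d * exp (b * (R / 2))
      ≤ (1 + R) ^ (a + 1) * (1 + R) ^ ((d : ℝ) - 1 - a) * exp (b * (R / 2)) := by
        rw [← rpow_add hR', show a + 1 + ((d : ℝ) - 1 - a) = d by ring, rpow_natCast]
        gcongr
        linarith
    _ ≤ exp (b / 2 * R) * (1 + R) ^ ((d : ℝ) - 1 - a) * exp (b * (R / 2)) := by gcongr
    _ = 1 * (1 + R) ^ ((d : ℝ) - 1 - a) * exp (b * R) := by
        rw [mul_right_comm, ← exp_add]
        ring_nf
    _ ≤ lam ^ (-a - 1) * (1 + R) ^ ((d : ℝ) - 1 - a) * exp (b * R) := by gcongr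

theorem one_add_mul_half_rpow_neg_mul_pow_mul_exp_le {d : ℕ} (hd : 1 ≤ d) {lam a b R : ℝ}
    (hlam : 0 < lam) (hlam1 : lam ≤ 1) (hlamb : lam ≤ b) (ha : 0 ≤ a) (hR : 0 ≤ R) :
    (1 + lam * (R / 2)) ^ (-a) * (R ^ (d - 1) * exp (b * R) / b) ≤
      2 ^ a * (lam ^ (-a - 1) * (1 + R) ^ ((d : ℝ) - 1 - a) * exp (b * R)) := by
  have hR' : 0 < 1 + R := by linarith
  have hb : 0 < b := hlam.trans_le hlamb
  have hbase : (1 + lam * (R / 2)) ^ (-a) ≤ (lam * (1 + R) / 2) ^ (-a) :=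
    rpow_le_rpow_of_nonpos (by positivity) (by nlinarith) (by linarith)
  have hpow : R ^ (d - 1) ≤ (1 + R) ^ ((d : ℝ) - 1) := by
    calc R ^ (d - 1) ≤ (1 + R) ^ (d - 1) := by gcongr; linarith
      _ = (1 + R) ^ ((d : ℝ) - 1) := by rw [← rpow_natCast, Nat.cast_sub hd, Nat.cast_one]
  calc (1 + lam * (R / 2)) ^ (-a) * (R ^ (d - 1) * exp (b * R) / b)
      ≤ (lam * (1 + R) / 2) ^ (-a) * ((1 + R) ^ ((d : ℝ) - 1) * exp (b * R) / lam) := by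
        refine mul_le_mul hbase ?_ (by positivity) (by positivity)
        gcongr
    _ = 2 ^ a * (lam ^ (-a - 1) * (1 + R) ^ ((d : ℝ) - 1 - a) * exp (b * R)) := by
        rw [div_rpow (by positivity) zero_le_two, mul_rpow hlam.le hR'.le, rpow_neg zero_le_two,
          rpow_sub_one hlam.ne', sub_eq_add_neg ((d : ℝ) - 1), rpow_add hR']
        field_simp

theorem pow_mul_exp_half_add_le {d : ℕ} (hd : 1 ≤ d) {lam a b R : ℝ} (hlam : 0 < lam)
    (hlam1 : lam ≤ 1) (hlamb : lam ≤ b) (ha : 0 ≤ a) (hR : 0 ≤ R)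
    (hR₀ : (1 + R) ^ (a + 1) ≤ exp (b / 2 * R)) :
    R ^ d * exp (b * (R / 2)) + (1 + lam * (R / 2)) ^ (-a) * (d * (R ^ (d - 1) * exp (b * R) / b)) ≤
      (1 + d * 2 ^ a) * (lam ^ (-a - 1) * (1 + R) ^ ((d : ℝ) - 1 - a) * exp (b * R)) := by
  have h₁ := pow_mul_exp_half_le (d := d) hlam hlam1 ha hR hR₀
  have h₂ := one_add_mul_half_rpow_neg_mul_pow_mul_exp_le hd hlam hlam1 hlamb ha hR
  linarith [mul_le_mul_of_nonneg_left h₂ (Nat.cast_nonneg d : (0 : ℝ) ≤ d)]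

theorem rpow_le_of_le_mul_rpow_mul_exp {y c u p v θ : ℝ} (hy : 0 ≤ y) (hc : 0 ≤ c) (hu : 0 ≤ u)
    (hθ : 0 ≤ θ) (h : y ≤ c * u ^ p * exp v) : y ^ θ ≤ c ^ θ * (u ^ (p * θ) * exp (v * θ)) := by
  calc y ^ θ ≤ (c * u ^ p * exp v) ^ θ := rpow_le_rpow hy h hθ
    _ = c ^ θ * (u ^ (p * θ) * exp (v * θ)) := by
        rw [mul_rpow (by positivity) (exp_pos _).le, mul_rpow hc (by positivity), ← rpow_mul hu,
          ← exp_mul, mul_assoc]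

section Ball

variable {E : Type*} [NormedAddCommGroup E] [NormedSpace ℝ E] [Nontrivial E]
  [FiniteDimensional ℝ E] [MeasurableSpace E] [BorelSpace E] (μ : Measure E) [μ.IsAddHaarMeasure]

theorem setIntegral_ball_fun_norm (f : ℝ → ℝ) (R : ℝ) :
    ∫ x in ball (0 : E) R, f ‖x‖ ∂μ =
      finrank ℝ E * μ.real (ball 0 1) * ∫ r in Ioo 0 R, r ^ (finrank ℝ E - 1) * f r := by
  have h : (ball (0 : E) R).indicator (fun x => f ‖x‖) = fun x => (Iio R).indicator f ‖x‖ := by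
    ext x
    simp only [indicator, mem_ball_zero_iff, mem_Iio]
  rw [← integral_indicator measurableSet_ball, h, integral_fun_norm_addHaar, nsmul_eq_mul,
    smul_eq_mul, mul_assoc, ← Ioi_inter_Iio, ← setIntegral_indicator measurableSet_Iio]
  simp only [smul_eq_mul, indicator_mul_right]

theorem setIntegral_ball_exp_norm_le {b : ℝ} (hb : 0 < b) {R : ℝ} (hR : 0 ≤ R) :
    ∫ x in ball (0 : E) R, exp (b * ‖x‖) ∂μ ≤
      finrank ℝ E * μ.real (ball 0 1) * (R ^ (finrank ℝ E - 1) * exp (b * R) / b) := by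
  rw [setIntegral_ball_fun_norm μ (fun r => exp (b * r))]
  gcongr
  exact integral_Ioo_pow_mul_exp_le _ hb hR

theorem setIntegral_ball_le_of_le_mul_rpow_mul_exp {f : E → ℝ} {K lam a b R : ℝ}
    (hf₀ : ∀ x, 0 ≤ f x) (hf : ∀ x, f x ≤ K * ((1 + lam * ‖x‖) ^ (-a) * exp (b * ‖x‖)))
    (hK : 0 ≤ K) (hlam : 0 ≤ lam) (ha : 0 ≤ a) (hb : 0 < b) (hR : 0 ≤ R) :
    ∫ x in ball (0 : E) R, f x ∂μ ≤ K * μ.real (ball 0 1) *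
      (R ^ finrank ℝ E * exp (b * (R / 2)) +
        (1 + lam * (R / 2)) ^ (-a) *
          (finrank ℝ E * (R ^ (finrank ℝ E - 1) * exp (b * R) / b))) := by
  set c := (1 + lam * (R / 2)) ^ (-a)
  have hc : 0 ≤ c := by positivity
  have hconst : IntegrableOn (fun _ : E => exp (b * (R / 2))) (ball 0 R) μ :=
    integrableOn_const measure_ball_lt_top.ne
  have hexp : IntegrableOn (fun x : E => exp (b * ‖x‖)) (ball 0 R) μ :=
    ((by fun_prop : Continuous fun x : E => exp (b * ‖x‖)).continuousOn.integrableOn_compact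
      (isCompact_closedBall 0 R)).mono_set ball_subset_closedBall
  calc ∫ x in ball (0 : E) R, f x ∂μ
      ≤ ∫ x in ball (0 : E) R, K * (exp (b * (R / 2)) + c * exp (b * ‖x‖)) ∂μ := by
        refine integral_mono_of_nonneg (ae_of_all _ hf₀)
          ((hconst.add (hexp.const_mul c)).const_mul K)
          (ae_of_all _ fun x => (hf x).trans (mul_le_mul_of_nonneg_left ?_ hK))
        exact one_add_mul_rpow_neg_mul_exp_le hlam ha hb.le (by positivity) (norm_nonneg x)
    _ = K * (μ.real (ball 0 R) * exp (b * (R / 2)) +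
          c * ∫ x in ball (0 : E) R, exp (b * ‖x‖) ∂μ) := by
        rw [integral_const_mul, integral_add hconst (hexp.const_mul c), setIntegral_const,
          integral_const_mul, smul_eq_mul]
    _ ≤ _ := by
        rw [← Measure.addHaar_real_closedBall_eq_addHaar_real_ball,
          Measure.addHaar_real_closedBall μ 0 hR, mul_assoc K]
        gcongr K * ?_
        linarith [mul_le_mul_of_nonneg_left (setIntegral_ball_exp_norm_le μ hb hR) hc]

end Ball

theorem stmt_10 (N : ℕ) (hN : 1 ≤ N) (θ : ℝ) (hθ : 1 < θ) (C₁ : ℝ) (hC₁ : 1 ≤ C₁) :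
    ∃ C > (1 : ℝ), ∀ lam ∈ Set.Ioo (0 : ℝ) 1,
      ∀ φ : EuclideanSpace ℝ (Fin N) → ℝ,
        (∀ x, 0 < φ x) →
        (∀ x, φ x ≤ C₁ * (1 + lam * ‖x‖) ^ (-((N : ℝ) - 1) / 2) * Real.exp (lam * ‖x‖)) →
        ∃ R₀ > (0 : ℝ), ∀ R ≥ R₀,
          (∫ x in Metric.ball (0 : EuclideanSpace ℝ (Fin N)) R, φ x ^ θ) ≤
            C * lam ^ (-((N : ℝ) - 1) * θ / 2 - 1) *
              (1 + R) ^ ((N : ℝ) - 1 - ((N : ℝ) - 1) * θ / 2) * Real.exp (lam * θ * R) := by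
  have : Nontrivial (EuclideanSpace ℝ (Fin N)) :=
    Module.nontrivial_of_finrank_pos (R := ℝ) (by rw [finrank_euclideanSpace_fin]; omega)
  have hθ₀ : 0 < θ := by linarith
  set a := ((N : ℝ) - 1) * θ / 2 with ha_def
  have ha : 0 ≤ a := by
    have : (1 : ℝ) ≤ N := by exact_mod_cast hN
    exact div_nonneg (mul_nonneg (by linarith) hθ₀.le) zero_le_two
  set κ := volume.real (ball (0 : EuclideanSpace ℝ (Fin N)) 1)
  have hK : 0 < C₁ ^ θ * κ * (1 + N * 2 ^ a) := by
    have : 0 < κ := ENNReal.toReal_pos (measure_ball_pos _ _ one_pos).ne' measure_ball_lt_top.ne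
    positivity
  refine ⟨C₁ ^ θ * κ * (1 + N * 2 ^ a) + 1, by linarith, ?_⟩
  rintro lam ⟨hlam₀, hlam₁⟩ φ hφ₀ hφ
  set b := lam * θ with hb_def
  have hb : 0 < b := by positivity
  obtain ⟨R₀, hR₀⟩ := eventually_atTop.1 (eventually_one_add_rpow_le_exp (a + 1) (half_pos hb))
  refine ⟨max R₀ 1, by positivity, fun R hR => ?_⟩
  have hφθ : ∀ x, φ x ^ θ ≤ C₁ ^ θ * ((1 + lam * ‖x‖) ^ (-a) * exp (b * ‖x‖)) := fun x => by
    convert rpow_le_of_le_mul_rpow_mul_exp (hφ₀ x).le (by positivity) (by positivity) hθ₀.le (hφ x)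
      using 4 <;> simp only [ha_def, hb_def] <;> ring
  have hR' : 0 ≤ R := zero_le_one.trans (le_of_max_le_right hR)
  rw [show -((N : ℝ) - 1) * θ / 2 - 1 = -a - 1 by rw [ha_def]; ring]
  calc ∫ x in ball (0 : EuclideanSpace ℝ (Fin N)) R, φ x ^ θ
      ≤ C₁ ^ θ * κ * (R ^ N * exp (b * (R / 2)) +
          (1 + lam * (R / 2)) ^ (-a) * (N * (R ^ (N - 1) * exp (b * R) / b))) := by
        simpa only [finrank_euclideanSpace_fin] using
          setIntegral_ball_le_of_le_mul_rpow_mul_exp volume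
            (fun x => (rpow_pos_of_pos (hφ₀ x) θ).le) hφθ (by positivity) hlam₀.le ha hb hR'
    _ ≤ C₁ ^ θ * κ * ((1 + N * 2 ^ a) *
          (lam ^ (-a - 1) * (1 + R) ^ ((N : ℝ) - 1 - a) * exp (b * R))) := by
        gcongr
        exact pow_mul_exp_half_add_le hN hlam₀ hlam₁.le (le_mul_of_one_le_right hlam₀.le hθ.le) ha
          hR' (hR₀ R (le_of_max_le_left hR))
    _ ≤ (C₁ ^ θ * κ * (1 + N * 2 ^ a) + 1) * lam ^ (-a - 1) * (1 + R) ^ ((N : ℝ) - 1 - a) *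
          exp (b * R) := by
        have : 0 ≤ lam ^ (-a - 1) * (1 + R) ^ ((N : ℝ) - 1 - a) * exp (b * R) := by positivity
        nlinarith
end

section
/- Let m ≥ 0, β > 0, γ = (m+2)/2, and let y_λ(t) = y₁(λ^{1/γ} t) be the normalized solution of y'' = λ² t^m y with y_λ(0⁺)=1, y_λ(∞)=0, satisfying the lower bound y_λ(t) ≥ C₁⁻¹ (λ^{1/γ} t)^{−m/4} exp(−γ⁻¹ λ t^γ) whenever λ t^γ ≥ T₀ (for some T₀ ≥ 1, C₁ > 1 depending on m). Define W_β(x,t) := ∫₀¹ y_λ(t) φ_λ(x) λ^{β−1} dλ with φ_λ ≥ 1 pointwise. Then there is C = C(m, β) > 0 such that for all t with t^γ > 2T₀ and all x ∈ ℝ^N: W_β(x,t) ≥ C t^{−(m+2)β/2}. -/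
open MeasureTheory Real Set

/-!
Put `s = λ t^γ`. On the band `λ ∈ (T₀ t^{-γ}, 2 T₀ t^{-γ}) ⊆ (0, 1)` we have `s ∈ [T₀, 2 T₀]`, so the
exponential lower bound for `y_λ(t)`, which depends on `λ` and `t` only through `s`, is at least a
constant; with `φ_λ ≥ 1` and `λ^{β-1} = s^{β-1} t^{-γ(β-1)}` the integrand is `≳ t^{-γ(β-1)}` on a
band of length `T₀ t^{-γ}`, and `γ β = (m+2) β / 2`.
-/

noncomputable def decayProfile (m γ s : ℝ) : ℝ :=
  (s ^ (1 / γ)) ^ (-m / 4) * exp (-(γ⁻¹ * s))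

lemma decayProfile_pos (m γ : ℝ) {s : ℝ} (hs : 0 < s) : 0 < decayProfile m γ s := by
  unfold decayProfile
  positivity

lemma decayProfile_antitoneOn {m γ : ℝ} (hm : 0 ≤ m) (hγ : 0 < γ) :
    AntitoneOn (decayProfile m γ) (Ioi 0) := by
  intro s (hs : 0 < s) S (hS : 0 < S) hsS
  have hroot : s ^ (1 / γ) ≤ S ^ (1 / γ) := by gcongr
  exact mul_le_mul (rpow_le_rpow_of_nonpos (by positivity) hroot (by linarith))
    (exp_le_exp.2 (by gcongr)) (exp_pos _).le (by positivity)

lemma rpow_mul_exp_eq_decayProfile (m : ℝ) {γ lam t : ℝ} (hγ : γ ≠ 0) (hlam : 0 ≤ lam)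
    (ht : 0 < t) :
    (lam ^ (1 / γ) * t) ^ (-m / 4) * exp (-(γ⁻¹ * lam * t ^ γ)) =
      decayProfile m γ (lam * t ^ γ) := by
  have hroot : lam ^ (1 / γ) * t = (lam * t ^ γ) ^ (1 / γ) := by
    rw [mul_rpow hlam (rpow_nonneg ht.le γ), one_div, rpow_rpow_inv ht.le hγ]
  rw [decayProfile, hroot, mul_assoc]

lemma min_rpow_le_rpow_of_mem_Icc {a b s : ℝ} (p : ℝ) (ha : 0 < a) (hs : s ∈ Icc a b) :
    min (a ^ p) (b ^ p) ≤ s ^ p := by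
  rcases le_total 0 p with hp | hp
  · exact (min_le_left _ _).trans (rpow_le_rpow ha.le hs.1 hp)
  · exact (min_le_right _ _).trans (rpow_le_rpow_of_nonpos (ha.trans_le hs.1) hs.2 hp)

lemma mul_sub_le_setIntegral_of_le_on_Ioo {f : ℝ → ℝ} {s : Set ℝ} {a b c : ℝ} (hab : a ≤ b)
    (hsub : Ioo a b ⊆ s) (hf : IntegrableOn f s) (hf0 : 0 ≤ᵐ[volume.restrict s] f)
    (hc : ∀ x ∈ Ioo a b, c ≤ f x) :
    c * (b - a) ≤ ∫ x in s, f x := by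
  have hvol : volume.real (Ioo a b) = b - a := by
    rw [Real.volume_real_Ioo, max_eq_left (sub_nonneg.2 hab)]
  calc c * (b - a) = c * volume.real (Ioo a b) := by rw [hvol]
    _ ≤ ∫ x in Ioo a b, f x :=
      setIntegral_ge_of_const_le_real measurableSet_Ioo measure_Ioo_lt_top.ne hc
        (hf.mono_set hsub)
    _ ≤ ∫ x in s, f x := setIntegral_mono_set hf hf0 hsub.eventuallyLE

lemma le_mul_mul_rpow_of_mem_band {m β γ T₀ C₁ u lam Y Φ : ℝ} (hm : 0 ≤ m) (hγ : 0 < γ)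
    (hT₀ : 0 < T₀) (hC₁ : 0 < C₁) (hu : 0 < u) (hlam : lam ∈ Ioo (T₀ / u) (2 * T₀ / u))
    (hY : C₁⁻¹ * decayProfile m γ (lam * u) ≤ Y) (hΦ : 1 ≤ Φ) :
    C₁⁻¹ * decayProfile m γ (2 * T₀) * min (T₀ ^ (β - 1)) ((2 * T₀) ^ (β - 1)) / u ^ (β - 1) ≤
      Y * Φ * lam ^ (β - 1) := by
  have hlam0 : 0 < lam := (div_pos hT₀ hu).trans hlam.1
  have hs : lam * u ∈ Icc T₀ (2 * T₀) :=
    ⟨((div_lt_iff₀ hu).1 hlam.1).le, ((lt_div_iff₀ hu).1 hlam.2).le⟩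
  have hY' : C₁⁻¹ * decayProfile m γ (2 * T₀) ≤ Y :=
    (mul_le_mul_of_nonneg_left (decayProfile_antitoneOn hm hγ (hT₀.trans_le hs.1)
      (by positivity : (0 : ℝ) < 2 * T₀) hs.2) (by positivity)).trans hY
  have hY0 : 0 ≤ Y := (mul_pos (inv_pos.2 hC₁) (decayProfile_pos m γ (by positivity))).le.trans hY'
  set M := min (T₀ ^ (β - 1)) ((2 * T₀) ^ (β - 1))
  have hpow : M / u ^ (β - 1) ≤ lam ^ (β - 1) := by
    rw [← mul_div_cancel_right₀ lam hu.ne', div_rpow (by positivity) hu.le]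
    gcongr
    exact min_rpow_le_rpow_of_mem_Icc _ hT₀ hs
  calc _ = C₁⁻¹ * decayProfile m γ (2 * T₀) * 1 * (M / u ^ (β - 1)) := by ring
    _ ≤ Y * Φ * lam ^ (β - 1) := mul_le_mul (mul_le_mul hY' hΦ zero_le_one hY0) hpow
      (div_nonneg (le_min (by positivity) (by positivity)) (by positivity))
      (mul_nonneg hY0 (zero_le_one.trans hΦ))

lemma rpow_sub_one_mul_rpow {t : ℝ} (ht : 0 < t) (γ β : ℝ) :
    (t ^ γ) ^ (β - 1) * t ^ γ = t ^ (γ * β) := by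
  rw [rpow_sub_one (by positivity), div_mul_cancel₀ _ (by positivity), ← rpow_mul ht.le]

theorem stmt_16_general (N : ℕ) (m β γ T₀ C₁ : ℝ) (hm : 0 ≤ m)
    (hγ : γ = (m + 2) / 2) (hT₀ : 1 ≤ T₀) (hC₁ : 1 < C₁)
    (y : ℝ → ℝ → ℝ) (φ : ℝ → EuclideanSpace ℝ (Fin N) → ℝ)
    (hypos : ∀ lam t : ℝ, 0 < lam → 0 < t → 0 < y lam t)
    (hφ : ∀ (lam : ℝ) (x : EuclideanSpace ℝ (Fin N)), 1 ≤ φ lam x)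
    (hylow : ∀ lam t : ℝ, 0 < lam → 0 < t → T₀ ≤ lam * t ^ γ →
      C₁⁻¹ * (lam ^ (1 / γ) * t) ^ (-m / 4) * Real.exp (-(γ⁻¹ * lam * t ^ γ)) ≤ y lam t)
    (hint : ∀ (x : EuclideanSpace ℝ (Fin N)) (t : ℝ), 0 < t →
      IntegrableOn (fun lam : ℝ => y lam t * φ lam x * lam ^ (β - 1)) (Set.Ioo (0 : ℝ) 1)) :
    ∃ C > (0 : ℝ), ∀ t > (0 : ℝ), 2 * T₀ < t ^ γ → ∀ x : EuclideanSpace ℝ (Fin N),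
      C * t ^ (-((m + 2) * β / 2)) ≤
        ∫ lam in Set.Ioo (0 : ℝ) 1, y lam t * φ lam x * lam ^ (β - 1) := by
  have hγ0 : 0 < γ := by rw [hγ]; linarith
  have hT₀0 : 0 < T₀ := by linarith
  set c := C₁⁻¹ * decayProfile m γ (2 * T₀) * min (T₀ ^ (β - 1)) ((2 * T₀) ^ (β - 1))
  have hc : 0 < c := mul_pos (mul_pos (by positivity) (decayProfile_pos m γ (by positivity)))
    (lt_min (by positivity) (by positivity))
  refine ⟨c * T₀, by positivity, fun t ht hT x => ?_⟩
  have hu : 0 < t ^ γ := by positivity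
  have hband (lam) (hlam : lam ∈ Ioo (T₀ / t ^ γ) (2 * T₀ / t ^ γ)) :
      c / (t ^ γ) ^ (β - 1) ≤ y lam t * φ lam x * lam ^ (β - 1) := by
    have hlam0 : 0 < lam := (div_pos hT₀0 hu).trans hlam.1
    refine le_mul_mul_rpow_of_mem_band hm hγ0 hT₀0 (by linarith) hu hlam ?_ (hφ lam x)
    rw [← rpow_mul_exp_eq_decayProfile m hγ0.ne' hlam0.le ht, ← mul_assoc]
    exact hylow lam t hlam0 ht (((div_lt_iff₀ hu).1 hlam.1).le)
  have hsub : Ioo (T₀ / t ^ γ) (2 * T₀ / t ^ γ) ⊆ Ioo 0 1 := fun lam hlam =>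
    ⟨(div_pos hT₀0 hu).trans hlam.1, hlam.2.trans_le ((div_le_one hu).2 hT.le)⟩
  have hf0 : 0 ≤ᵐ[volume.restrict (Ioo 0 1)] fun lam => y lam t * φ lam x * lam ^ (β - 1) := by
    filter_upwards [ae_restrict_mem measurableSet_Ioo] with lam hlam
    exact mul_nonneg (mul_nonneg (hypos lam t hlam.1 ht).le (zero_le_one.trans (hφ lam x)))
      (rpow_nonneg hlam.1.le _)
  calc c * T₀ * t ^ (-((m + 2) * β / 2))
      = c / (t ^ γ) ^ (β - 1) * (2 * T₀ / t ^ γ - T₀ / t ^ γ) := by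
        rw [show (m + 2) * β / 2 = γ * β by rw [hγ]; ring, rpow_neg ht.le,
          ← rpow_sub_one_mul_rpow ht]
        field_simp
        ring
    _ ≤ _ := mul_sub_le_setIntegral_of_le_on_Ioo (by gcongr; linarith) hsub (hint x t ht) hf0
      hband

theorem stmt_16 (N : ℕ) (m β γ T₀ C₁ : ℝ) (hm : 0 ≤ m) (hβ : 0 < β)
    (hγ : γ = (m + 2) / 2) (hT₀ : 1 ≤ T₀) (hC₁ : 1 < C₁)
    (y : ℝ → ℝ → ℝ) (φ : ℝ → EuclideanSpace ℝ (Fin N) → ℝ)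
    (hypos : ∀ lam t : ℝ, 0 < lam → 0 < t → 0 < y lam t)
    (hφ : ∀ (lam : ℝ) (x : EuclideanSpace ℝ (Fin N)), 1 ≤ φ lam x)
    (hylow : ∀ lam t : ℝ, 0 < lam → 0 < t → T₀ ≤ lam * t ^ γ →
      C₁⁻¹ * (lam ^ (1 / γ) * t) ^ (-m / 4) * Real.exp (-(γ⁻¹ * lam * t ^ γ)) ≤ y lam t)
    (hint : ∀ (x : EuclideanSpace ℝ (Fin N)) (t : ℝ), 0 < t →
      IntegrableOn (fun lam : ℝ => y lam t * φ lam x * lam ^ (β - 1)) (Set.Ioo (0 : ℝ) 1)) :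
    ∃ C > (0 : ℝ), ∀ t > (0 : ℝ), 2 * T₀ < t ^ γ → ∀ x : EuclideanSpace ℝ (Fin N),
      C * t ^ (-((m + 2) * β / 2)) ≤
        ∫ lam in Set.Ioo (0 : ℝ) 1, y lam t * φ lam x * lam ^ (β - 1) :=
  stmt_16_general N m β γ T₀ C₁ hm hγ hT₀ hC₁ y φ hypos hφ hylow hint
end
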